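/- Let X = (X₁,...,X_p)' have i.i.d. entries with mean zero, unit variance, and finite moments, and let C be a p×p real matrix. Then for p = 2: E|X'CX − tr(C)|² ≤ K[(E|X₁|⁴) tr(CC') + E|X₁|⁴ tr(CC')] for a universal constant K; in particular E|X'CX − tr(C)|² ≤ M · E(X₁⁴) · tr(CC') for some universal constant M. -/

import Mathlib

open Matrix MeasureTheory ProbabilityTheory BigOperators

lemma pbound (x : ℝ) {n : ℕ} (h : n ≤ 4) : |x| ^ n ≤ 1 + x ^ 4 := by
  have hx : (0:ℝ) ≤ |x| := abs_nonneg x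
  have h4 : |x| ^ 4 = x ^ 4 := by rw [← abs_pow]; exact abs_of_nonneg (by positivity)
  rcases le_total |x| 1 with h1 | h1
  · have : |x| ^ n ≤ 1 := pow_le_one₀ hx h1
    nlinarith [pow_nonneg (sq_nonneg x) 2, sq_nonneg (x^2)]
  · calc |x| ^ n ≤ |x| ^ 4 := pow_le_pow_right₀ h1 h
      _ = x ^ 4 := h4
      _ ≤ 1 + x ^ 4 := by linarith

lemma qbound (a b c d : ℝ) : |a * b * c * d| ≤ (a^4 + b^4 + c^4 + d^4) / 4 := by
  have h : |a * b * c * d| = |a| * |b| * |c| * |d| := by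
    rw [abs_mul, abs_mul, abs_mul]
  have h4 : ∀ x : ℝ, |x| ^ 4 = x ^ 4 := fun x => by
    rw [← abs_pow]; exact abs_of_nonneg (by positivity)
  have ha := abs_nonneg a; have hb := abs_nonneg b
  have hc := abs_nonneg c; have hd := abs_nonneg d
  rw [h, ← h4 a, ← h4 b, ← h4 c, ← h4 d]
  nlinarith [sq_nonneg (|a| * |b| - |c| * |d|), sq_nonneg (|a|^2 - |b|^2),
    sq_nonneg (|c|^2 - |d|^2), mul_nonneg ha hb, mul_nonneg hc hd,
    sq_nonneg (|a| * |b| + |c| * |d|)]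

/-- Kronecker delta. -/
def Dd {p : ℕ} (i j : Fin p) : ℝ := if i = j then 1 else 0

/-- Value of the covariance term. -/
def Tt (m4 : ℝ) {p : ℕ} (i j k l : Fin p) : ℝ :=
  (if k = i then (if l = j then (if i = j then m4 - 1 else 1) else 0) else 0) +
  (if k = j ∧ l = i ∧ ¬ i = j then 1 else 0)


/-- (Bai–Silverstein Lemma 2.7, case p = 2.) There is a universal
constant K₀ such that for any probability space, any p ≥ 1, any X ∈ ℝ^p with
i.i.d. standardized entries (mean 0, variance 1, finite fourth moment) and any
real p×p matrix C,
E|X'CX − tr(C)|² ≤ K₀[(E X₁⁴) tr(CC') + (E X₁⁴) tr(CC')]; in particular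
E|X'CX − tr(C)|² ≤ M · E(X₁⁴) · tr(CC') for a universal constant M. -/
theorem stmt4 :
    ∃ M : ℝ, 0 < M ∧
      ∀ (Ω : Type) (_ : MeasurableSpace Ω) (μ : Measure Ω),
        IsProbabilityMeasure μ →
        ∀ (p : ℕ) (hp : 0 < p) (X : Ω → Fin p → ℝ)
          (C : Matrix (Fin p) (Fin p) ℝ),
          (∀ i, Measurable fun ω => X ω i) →
          iIndepFun (fun i ω => X ω i) μ →
          (∀ i j, IdentDistrib (fun ω => X ω i) (fun ω => X ω j) μ μ) →
          (∀ i, ∫ ω, X ω i ∂μ = 0) →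
          (∀ i, ∫ ω, (X ω i) ^ 2 ∂μ = 1) →
          (∀ i, Integrable (fun ω => (X ω i) ^ 4) μ) →
          Integrable
            (fun ω => |(∑ i, ∑ j, C i j * X ω i * X ω j) - C.trace| ^ 2) μ →
          ∫ ω, |(∑ i, ∑ j, C i j * X ω i * X ω j) - C.trace| ^ 2 ∂μ
            ≤ M * (∫ ω, (X ω ⟨0, hp⟩) ^ 4 ∂μ) * (C * Cᵀ).trace := by
  classical
  refine ⟨4, by norm_num, ?_⟩
  intro Ω mΩ μ hprob p hp X C hmeas hind hident hmean hvar hint4 _hInt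
  set m4 : ℝ := ∫ ω, (X ω ⟨0, hp⟩) ^ 4 ∂μ with hm4def
  -- identically distributed fourth moments
  have hm4i : ∀ i, ∫ ω, (X ω i) ^ 4 ∂μ = m4 := fun i =>
    ((hident i ⟨0, hp⟩).comp (measurable_id.pow_const 4)).integral_eq
  -- integrability of powers up to 4
  have hintpow : ∀ (i : Fin p) (n : ℕ), n ≤ 4 → Integrable (fun ω => (X ω i) ^ n) μ := by
    intro i n hn
    refine ((integrable_const (1:ℝ)).add (hint4 i)).mono'
      (((hmeas i).pow_const n).aestronglyMeasurable) ?_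
    filter_upwards with ω
    rw [Real.norm_eq_abs, abs_pow]
    exact pbound _ hn
  have hint1 : ∀ i : Fin p, Integrable (fun ω => X ω i) μ := by
    intro i
    have := hintpow i 1 (by norm_num)
    simpa using this
  -- integrability of products
  have hintM4 : ∀ i j k l : Fin p,
      Integrable (fun ω => X ω i * X ω j * X ω k * X ω l) μ := by
    intro i j k l
    refine (((((hint4 i).add (hint4 j)).add (hint4 k)).add (hint4 l)).div_const 4).mono'
      ((((hmeas i).mul (hmeas j)).mul (hmeas k)).mul (hmeas l)).aestronglyMeasurable ?_
    filter_upwards with ω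
    rw [Real.norm_eq_abs]
    exact qbound _ _ _ _
  have hintM3 : ∀ i j k : Fin p, Integrable (fun ω => X ω i * X ω j * X ω k) μ := by
    intro i j k
    refine ((((hint4 i).add (hint4 j)).add (hint4 k)).add (integrable_const 1)).mono'
      (((hmeas i).mul (hmeas j)).mul (hmeas k)).aestronglyMeasurable ?_
    filter_upwards with ω
    rw [Real.norm_eq_abs]
    calc |X ω i * X ω j * X ω k| = |X ω i * X ω j * X ω k * 1| := by rw [mul_one]
      _ ≤ ((X ω i)^4 + (X ω j)^4 + (X ω k)^4 + 1^4) / 4 := qbound _ _ _ _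
      _ ≤ (X ω i)^4 + (X ω j)^4 + (X ω k)^4 + 1 := by
          nlinarith [sq_nonneg ((X ω i)^2), sq_nonneg ((X ω j)^2), sq_nonneg ((X ω k)^2)]
  have hintM2 : ∀ i j : Fin p, Integrable (fun ω => X ω i * X ω j) μ := by
    intro i j
    refine (((hint4 i).add (hint4 j)).add (integrable_const 2)).mono'
      ((hmeas i).mul (hmeas j)).aestronglyMeasurable ?_
    filter_upwards with ω
    rw [Real.norm_eq_abs]
    calc |X ω i * X ω j| = |X ω i * X ω j * 1 * 1| := by rw [mul_one, mul_one]
      _ ≤ ((X ω i)^4 + (X ω j)^4 + 1^4 + 1^4) / 4 := qbound _ _ _ _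
      _ ≤ (X ω i)^4 + (X ω j)^4 + 2 := by
          nlinarith [sq_nonneg ((X ω i)^2), sq_nonneg ((X ω j)^2)]
  -- fourth moment at least 1
  have hm4ge1 : 1 ≤ m4 := by
    have hL2 : MemLp (fun ω => (X ω ⟨0, hp⟩)^2) 2 μ := by
      rw [memLp_two_iff_integrable_sq (((hmeas ⟨0, hp⟩).pow_const 2).aestronglyMeasurable)]
      exact (hint4 ⟨0, hp⟩).congr
        (by filter_upwards with ω; show X ω ⟨0, hp⟩ ^ 4 = (X ω ⟨0, hp⟩ ^ 2) ^ 2; ring)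
    have hv := variance_nonneg (fun ω => (X ω ⟨0, hp⟩)^2) μ
    rw [variance_eq_sub hL2] at hv
    have h1 : (fun ω => (X ω ⟨0, hp⟩)^2) ^ 2 = fun ω => (X ω ⟨0, hp⟩) ^ 4 := by
      funext ω; show (X ω ⟨0, hp⟩ ^ 2) ^ 2 = X ω ⟨0, hp⟩ ^ 4; ring
    rw [h1] at hv
    rw [hvar ⟨0, hp⟩] at hv
    rw [hm4def]
    linarith
  -- product of expectations for two independent powers
  have hduo : ∀ (a b : Fin p) (u v : ℕ), a ≠ b → u ≤ 4 → v ≤ 4 →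
      ∫ ω, (X ω a)^u * (X ω b)^v ∂μ
        = (∫ ω, (X ω a)^u ∂μ) * (∫ ω, (X ω b)^v ∂μ) := by
    intro a b u v hab hu hv
    exact ((hind.indepFun hab).comp (measurable_id.pow_const u)
      (measurable_id.pow_const v)).integral_fun_mul_eq_mul_integral
      (hintpow a u hu).aestronglyMeasurable (hintpow b v hv).aestronglyMeasurable
  -- three distinct indices
  have htrio : ∀ a b c : Fin p, a ≠ b → a ≠ c → b ≠ c →
      ∫ ω, (X ω a)^2 * X ω b * X ω c ∂μ = 0 := by
    intro a b c hab hac hbc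
    have hba : ¬ b = a := fun h => hab h.symm
    have hca : ¬ c = a := fun h => hac h.symm
    set f : Fin p → Ω → ℝ :=
      fun t => (fun x : ℝ => x ^ (if t = a then 2 else 1)) ∘ (fun ω => X ω t) with hf
    have hfind : iIndepFun f μ :=
      hind.comp (fun t => fun x : ℝ => x ^ (if t = a then 2 else 1))
        (fun t => measurable_id.pow_const _)
    have hfmeas : ∀ t, Measurable (f t) := fun t => (hmeas t).pow_const _
    have hbmem : b ∉ ({a, c} : Finset (Fin p)) := by simp [hba, hbc]
    have hprod : (∏ j ∈ ({a, c} : Finset (Fin p)), f j) = fun ω => X ω a ^ 2 * X ω c := by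
      rw [Finset.prod_pair hac]
      funext ω
      simp [hf, hca]
    have hi1 : Integrable (∏ j ∈ ({a, c} : Finset (Fin p)), f j) μ := by
      rw [hprod]
      exact (hintM3 a a c).congr (by filter_upwards with ω; ring)
    have hi2 : Integrable (f b) μ := by
      have := hintpow b 1 (by norm_num)
      simp only [hf, if_neg hba]
      simpa [Function.comp_def] using this
    have hkey := (hfind.indepFun_finsetProd_of_notMem hfmeas hbmem).integral_mul_eq_mul_integral
      hi1.aestronglyMeasurable hi2.aestronglyMeasurable
    have hfb : ∫ ω, f b ω ∂μ = 0 := by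
      have : f b = fun ω => X ω b := by funext ω; simp [hf, hba]
      rw [this]; exact hmean b
    have heq : (fun ω => X ω a ^ 2 * X ω b * X ω c)
        = (∏ j ∈ ({a, c} : Finset (Fin p)), f j) * f b := by
      rw [hprod]; funext ω; simp [hf, hba]; ring
    rw [heq]
    calc ∫ ω, ((∏ j ∈ ({a, c} : Finset (Fin p)), f j) * f b) ω ∂μ
        = (∫ ω, (∏ j ∈ ({a, c} : Finset (Fin p)), f j) ω ∂μ) * ∫ ω, f b ω ∂μ := hkey
      _ = 0 := by rw [hfb, mul_zero]
  -- four distinct indices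
  have hquad : ∀ a b c d : Fin p, a ≠ b → a ≠ c → a ≠ d → b ≠ c → b ≠ d → c ≠ d →
      ∫ ω, X ω a * X ω b * X ω c * X ω d ∂μ = 0 := by
    intro a b c d hab hac had hbc hbd hcd
    have hda : ¬ d = a := fun h => had h.symm
    have hdb : ¬ d = b := fun h => hbd h.symm
    have hdc : ¬ d = c := fun h => hcd h.symm
    have hdmem : d ∉ ({a, b, c} : Finset (Fin p)) := by simp [hda, hdb, hdc]
    have hprod : (∏ j ∈ ({a, b, c} : Finset (Fin p)), (fun i ω => X ω i) j)
        = fun ω => X ω a * (X ω b * X ω c) := by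
      rw [Finset.prod_insert (by simp [hab, hac]), Finset.prod_pair hbc]
      rfl
    have hintP : Integrable (∏ j ∈ ({a, b, c} : Finset (Fin p)), (fun i ω => X ω i) j) μ := by
      rw [hprod]
      exact (hintM3 a b c).congr (by filter_upwards with ω; ring)
    have hkey := (hind.indepFun_finsetProd_of_notMem hmeas hdmem).integral_mul_eq_mul_integral
      hintP.aestronglyMeasurable (hint1 d).aestronglyMeasurable
    have heq : (fun ω => X ω a * X ω b * X ω c * X ω d)
        = (∏ j ∈ ({a, b, c} : Finset (Fin p)), (fun i ω => X ω i) j) * (fun ω => X ω d) := by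
      rw [hprod]; funext ω; simp only [Pi.mul_apply]; ring
    rw [heq]
    calc ∫ ω, ((∏ j ∈ ({a, b, c} : Finset (Fin p)), (fun i ω => X ω i) j) * fun ω => X ω d) ω ∂μ
        = (∫ ω, (∏ j ∈ ({a, b, c} : Finset (Fin p)), (fun i ω => X ω i) j) ω ∂μ)
          * ∫ ω, X ω d ∂μ := hkey
      _ = 0 := by rw [hmean d, mul_zero]
  -- second moments
  have hE2 : ∀ i j : Fin p, ∫ ω, X ω i * X ω j ∂μ = Dd i j := by
    intro i j
    by_cases h : i = j
    · subst h
      rw [show (fun ω => X ω i * X ω i) = fun ω => X ω i ^ 2 from funext fun ω => by ring,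
        hvar i]
      simp [Dd]
    · have hd := hduo i j 1 1 h (by norm_num) (by norm_num)
      simp only [pow_one] at hd
      rw [hd, hmean i, zero_mul]
      simp [Dd, h]
  -- fourth moments, all cases
  have hTval : ∀ i j k l : Fin p, ∫ ω, X ω i * X ω j * X ω k * X ω l ∂μ
      = Tt m4 i j k l + Dd i j * Dd k l := by
    intro i j k l
    by_cases hij : i = j
    · subst hij
      by_cases hkl : k = l
      · subst hkl
        by_cases hik : i = k
        · subst hik
          rw [show (fun ω => X ω i * X ω i * X ω i * X ω i) = fun ω => X ω i ^ 4 from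
            funext fun ω => by ring, hm4i i]
          simp [Tt, Dd]
        · have hki : ¬ k = i := fun h => hik h.symm
          rw [show (fun ω => X ω i * X ω i * X ω k * X ω k)
              = fun ω => X ω i ^ 2 * X ω k ^ 2 from funext fun ω => by ring,
            hduo i k 2 2 hik (by norm_num) (by norm_num), hvar i, hvar k]
          simp [Tt, Dd, hik, hki]
      · by_cases hik : i = k
        · subst hik
          rw [show (fun ω => X ω i * X ω i * X ω i * X ω l)
              = fun ω => X ω i ^ 3 * X ω l ^ 1 from funext fun ω => by ring,
            hduo i l 3 1 hkl (by norm_num) (by norm_num)]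
          have hli : ¬ l = i := fun h => hkl h.symm
          simp [pow_one, hmean l, Tt, Dd, hkl, hli]
        · by_cases hil : i = l
          · subst hil
            have hki : ¬ k = i := fun h => hik h.symm
            rw [show (fun ω => X ω i * X ω i * X ω k * X ω i)
                = fun ω => X ω i ^ 3 * X ω k ^ 1 from funext fun ω => by ring,
              hduo i k 3 1 hik (by norm_num) (by norm_num)]
            simp [pow_one, hmean k, Tt, Dd, hik, hki, hkl]
          · have hki : ¬ k = i := fun h => hik h.symm
            have hli : ¬ l = i := fun h => hil h.symm
            rw [show (fun ω => X ω i * X ω i * X ω k * X ω l)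
                = fun ω => X ω i ^ 2 * X ω k * X ω l from funext fun ω => by ring,
              htrio i k l hik hil hkl]
            simp [Tt, Dd, hkl, hki, hli]
    · by_cases hkl : k = l
      · subst hkl
        by_cases hik : i = k
        · subst hik
          rw [show (fun ω => X ω i * X ω j * X ω i * X ω i)
              = fun ω => X ω i ^ 3 * X ω j ^ 1 from funext fun ω => by ring,
            hduo i j 3 1 hij (by norm_num) (by norm_num)]
          simp [pow_one, hmean j, Tt, Dd, hij]
        · by_cases hjk : j = k
          · subst hjk
            have hji : ¬ j = i := fun h => hij h.symm
            rw [show (fun ω => X ω i * X ω j * X ω j * X ω j)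
                = fun ω => X ω j ^ 3 * X ω i ^ 1 from funext fun ω => by ring,
              hduo j i 3 1 hji (by norm_num) (by norm_num)]
            simp [pow_one, hmean i, Tt, Dd, hij, hji]
          · have hki : ¬ k = i := fun h => hik h.symm
            have hkj : ¬ k = j := fun h => hjk h.symm
            rw [show (fun ω => X ω i * X ω j * X ω k * X ω k)
                = fun ω => X ω k ^ 2 * X ω i * X ω j from funext fun ω => by ring,
              htrio k i j hki hkj hij]
            simp [Tt, Dd, hij, hki, hkj]
      · by_cases hik : i = k
        · subst hik
          by_cases hjl : j = l
          · subst hjl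
            rw [show (fun ω => X ω i * X ω j * X ω i * X ω j)
                = fun ω => X ω i ^ 2 * X ω j ^ 2 from funext fun ω => by ring,
              hduo i j 2 2 hij (by norm_num) (by norm_num), hvar i, hvar j]
            simp [Tt, Dd, hij]
          · have hlj : ¬ l = j := fun h => hjl h.symm
            rw [show (fun ω => X ω i * X ω j * X ω i * X ω l)
                = fun ω => X ω i ^ 2 * X ω j * X ω l from funext fun ω => by ring,
              htrio i j l hij hkl hjl]
            simp [Tt, Dd, hij, hjl, hlj, hkl]
        · by_cases hil : i = l
          · subst hil
            by_cases hjk : j = k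
            · subst hjk
              have hji : ¬ j = i := fun h => hij h.symm
              rw [show (fun ω => X ω i * X ω j * X ω j * X ω i)
                  = fun ω => X ω i ^ 2 * X ω j ^ 2 from funext fun ω => by ring,
                hduo i j 2 2 hij (by norm_num) (by norm_num), hvar i, hvar j]
              simp [Tt, Dd, hij, hji]
            · have hji : ¬ j = i := fun h => hij h.symm
              have hki : ¬ k = i := fun h => hik h.symm
              have hkj : ¬ k = j := fun h => hjk h.symm
              rw [show (fun ω => X ω i * X ω j * X ω k * X ω i)
                  = fun ω => X ω i ^ 2 * X ω j * X ω k from funext fun ω => by ring,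
                htrio i j k hij hik hjk]
              simp [Tt, Dd, hij, hji, hki, hjk, hkj]
          · by_cases hjk : j = k
            · subst hjk
              have hji : ¬ j = i := fun h => hij h.symm
              have hli : ¬ l = i := fun h => hil h.symm
              rw [show (fun ω => X ω i * X ω j * X ω j * X ω l)
                  = fun ω => X ω j ^ 2 * X ω i * X ω l from funext fun ω => by ring,
                htrio j i l hji hkl hil]
              simp [Tt, Dd, hij, hji, hli, hkl]
            · by_cases hjl : j = l
              · subst hjl
                have hji : ¬ j = i := fun h => hij h.symm
                have hkj : ¬ k = j := fun h => hjk h.symm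
                have hki : ¬ k = i := fun h => hik h.symm
                rw [show (fun ω => X ω i * X ω j * X ω k * X ω j)
                    = fun ω => X ω j ^ 2 * X ω i * X ω k from funext fun ω => by ring,
                  htrio j i k hji hjk hik]
                simp [Tt, Dd, hij, hji, hjk, hik, hkj, hki]
              · have hki : ¬ k = i := fun h => hik h.symm
                have hkj : ¬ k = j := fun h => hjk h.symm
                have hli : ¬ l = i := fun h => hil h.symm
                have hlj : ¬ l = j := fun h => hjl h.symm
                rw [hquad i j k l hij hik hil hjk hjl hkl]
                simp [Tt, Dd, hij, hki, hkj, hli, hlj, hkl]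
  -- the quadratic form terms
  set A : Fin p → Fin p → Ω → ℝ := fun i j ω => C i j * (X ω i * X ω j - Dd i j) with hA
  have hexp : ∀ i j k l : Fin p, (fun ω => A i j ω * A k l ω) = fun ω =>
      (C i j * C k l) * (X ω i * X ω j * X ω k * X ω l)
      - (C i j * C k l * Dd k l) * (X ω i * X ω j)
      - (C i j * C k l * Dd i j) * (X ω k * X ω l)
      + C i j * C k l * (Dd i j * Dd k l) := by
    intro i j k l; funext ω; simp only [hA]; ring
  have hterm_int : ∀ i j k l : Fin p, Integrable (fun ω => A i j ω * A k l ω) μ := by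
    intro i j k l; rw [hexp i j k l]
    exact ((((hintM4 i j k l).const_mul _).sub ((hintM2 i j).const_mul _)).sub
      ((hintM2 k l).const_mul _)).add (integrable_const _)
  have hterm_val : ∀ i j k l : Fin p,
      ∫ ω, A i j ω * A k l ω ∂μ = C i j * C k l * Tt m4 i j k l := by
    intro i j k l
    have I1 : Integrable (fun ω => C i j * C k l * (X ω i * X ω j * X ω k * X ω l)) μ :=
      (hintM4 i j k l).const_mul _
    have I2 : Integrable (fun ω => C i j * C k l * Dd k l * (X ω i * X ω j)) μ :=
      (hintM2 i j).const_mul _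
    have I3 : Integrable (fun ω => C i j * C k l * Dd i j * (X ω k * X ω l)) μ :=
      (hintM2 k l).const_mul _
    have e1 : ∫ ω, (C i j * C k l * (X ω i * X ω j * X ω k * X ω l)
        - C i j * C k l * Dd k l * (X ω i * X ω j)
        - C i j * C k l * Dd i j * (X ω k * X ω l)
        + C i j * C k l * (Dd i j * Dd k l)) ∂μ
        = ∫ ω, (C i j * C k l * (X ω i * X ω j * X ω k * X ω l)
            - C i j * C k l * Dd k l * (X ω i * X ω j)
            - C i j * C k l * Dd i j * (X ω k * X ω l)) ∂μ
          + ∫ _ω, C i j * C k l * (Dd i j * Dd k l) ∂μ :=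
      integral_add ((I1.sub I2).sub I3) (integrable_const _)
    have e2 : ∫ ω, (C i j * C k l * (X ω i * X ω j * X ω k * X ω l)
        - C i j * C k l * Dd k l * (X ω i * X ω j)
        - C i j * C k l * Dd i j * (X ω k * X ω l)) ∂μ
        = ∫ ω, (C i j * C k l * (X ω i * X ω j * X ω k * X ω l)
            - C i j * C k l * Dd k l * (X ω i * X ω j)) ∂μ
          - ∫ ω, C i j * C k l * Dd i j * (X ω k * X ω l) ∂μ :=
      integral_sub (I1.sub I2) I3
    have e3 : ∫ ω, (C i j * C k l * (X ω i * X ω j * X ω k * X ω l)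
        - C i j * C k l * Dd k l * (X ω i * X ω j)) ∂μ
        = ∫ ω, C i j * C k l * (X ω i * X ω j * X ω k * X ω l) ∂μ
          - ∫ ω, C i j * C k l * Dd k l * (X ω i * X ω j) ∂μ :=
      integral_sub I1 I2
    rw [hexp i j k l, e1, e2, e3, integral_const_mul, integral_const_mul, integral_const_mul,
      integral_const]
    rw [hTval i j k l, hE2 i j, hE2 k l]
    simp only [probReal_univ, measure_univ, ENNReal.toReal_one, one_smul, smul_eq_mul]
    ring
  -- rewrite the integrand as a quadruple sum
  have hsum : (fun ω => |(∑ i, ∑ j, C i j * X ω i * X ω j) - C.trace| ^ 2)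
      = fun ω => ∑ i, ∑ j, ∑ k, ∑ l, A i j ω * A k l ω := by
    funext ω
    rw [sq_abs]
    have hrow : ∀ i : Fin p, ∑ j, A i j ω = (∑ j, C i j * X ω i * X ω j) - C i i := by
      intro i
      have hterm : ∀ j : Fin p, A i j ω
          = C i j * X ω i * X ω j - C i j * Dd i j := fun j => by
        simp only [hA]; ring
      rw [Finset.sum_congr rfl fun j _ => hterm j, Finset.sum_sub_distrib]
      congr 1
      simp [Dd, mul_ite, mul_one, mul_zero, Finset.sum_ite_eq]
    have h1 : (∑ i, ∑ j, C i j * X ω i * X ω j) - C.trace = ∑ i, ∑ j, A i j ω := by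
      rw [show (∑ i, ∑ j, A i j ω) = ∑ i, ((∑ j, C i j * X ω i * X ω j) - C i i) from
        Finset.sum_congr rfl fun i _ => hrow i]
      rw [Finset.sum_sub_distrib]
      congr 1
    rw [h1, pow_two, Finset.sum_mul_sum]
    refine Finset.sum_congr rfl fun i _ => ?_
    calc ∑ k, (∑ j, A i j ω) * (∑ l, A k l ω)
        = ∑ k, ∑ j, ∑ l, A i j ω * A k l ω :=
          Finset.sum_congr rfl fun k _ => Finset.sum_mul_sum _ _ _ _
      _ = ∑ j, ∑ k, ∑ l, A i j ω * A k l ω := Finset.sum_comm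
  have hmain : ∫ ω, |(∑ i, ∑ j, C i j * X ω i * X ω j) - C.trace| ^ 2 ∂μ
      = ∑ i, ∑ j, ∑ k, ∑ l, ∫ ω, A i j ω * A k l ω ∂μ := by
    rw [hsum]
    rw [integral_finset_sum _ (fun i _ => integrable_finset_sum _ fun j _ =>
      integrable_finset_sum _ fun k _ => integrable_finset_sum _ fun l _ => hterm_int i j k l)]
    refine Finset.sum_congr rfl fun i _ => ?_
    rw [integral_finset_sum _ (fun j _ => integrable_finset_sum _ fun k _ =>
      integrable_finset_sum _ fun l _ => hterm_int i j k l)]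
    refine Finset.sum_congr rfl fun j _ => ?_
    rw [integral_finset_sum _ (fun k _ => integrable_finset_sum _ fun l _ => hterm_int i j k l)]
    refine Finset.sum_congr rfl fun k _ => ?_
    exact integral_finset_sum _ (fun l _ => hterm_int i j k l)
  have htr : (C * Cᵀ).trace = ∑ i, ∑ j, (C i j)^2 := by
    simp [Matrix.trace, Matrix.diag, Matrix.mul_apply, Matrix.transpose_apply, sq]
  calc ∫ ω, |(∑ i, ∑ j, C i j * X ω i * X ω j) - C.trace| ^ 2 ∂μ
      = ∑ i, ∑ j, ∑ k, ∑ l, ∫ ω, A i j ω * A k l ω ∂μ := hmain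
    _ = ∑ i, ∑ j, (C i j * C i j * (if i = j then m4 - 1 else 1)
          + (if i = j then 0 else C i j * C j i)) := by
        refine Finset.sum_congr rfl fun i _ => Finset.sum_congr rfl fun j _ => ?_
        simp only [hterm_val]
        by_cases h : i = j
        · subst h
          simp [Tt, mul_add, Finset.sum_add_distrib, mul_ite, mul_one, mul_zero,
            Finset.sum_ite_irrel, Finset.sum_ite_eq', ite_and, Finset.sum_const_zero]
        · simp [Tt, h, mul_add, Finset.sum_add_distrib, mul_ite, mul_one, mul_zero,
            Finset.sum_ite_irrel, Finset.sum_ite_eq', ite_and, Finset.sum_const_zero]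
    _ ≤ ∑ i, ∑ j, (2 * m4 * (C i j)^2 + 2 * m4 * (C j i)^2) := by
        refine Finset.sum_le_sum fun i _ => Finset.sum_le_sum fun j _ => ?_
        split_ifs with h
        · nlinarith [sq_nonneg (C i j), sq_nonneg (C j i), hm4ge1,
            mul_nonneg (sq_nonneg (C i j)) (le_trans zero_le_one hm4ge1),
            mul_nonneg (sq_nonneg (C j i)) (le_trans zero_le_one hm4ge1)]
        · nlinarith [sq_nonneg (C i j - C j i), sq_nonneg (C i j), sq_nonneg (C j i),
            mul_nonneg (by linarith : (0:ℝ) ≤ m4 - 1) (sq_nonneg (C i j)),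
            mul_nonneg (by linarith : (0:ℝ) ≤ m4 - 1) (sq_nonneg (C j i))]
    _ = 4 * m4 * ∑ i, ∑ j, (C i j)^2 := by
        have hswap : (∑ i, ∑ j, 2 * m4 * (C j i)^2) = ∑ i, ∑ j, 2 * m4 * (C i j)^2 :=
          Finset.sum_comm
        simp only [Finset.sum_add_distrib]
        rw [hswap, ← two_mul]
        simp only [← Finset.mul_sum]
        ring
    _ = 4 * m4 * (C * Cᵀ).trace := by rw [htr]
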